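/- Let (D_λ)_{λ∈Λ} be a family of Prüfer domains and R = ∏_{λ∈Λ} D_λ. Then: (1) for every prime ideal 𝔓 of R there exists an ultrafilter U in B with 𝔓 ⊆ (U); (2) if 𝔓 is a prime ideal of R and U is an ultrafilter in B with 𝔓 ⊆ (U), then 𝔓 = ⋃_{x ∈ 𝔓} (U)^{g(x)}, where each (U)^{g(x)} = {r ∈ R | ∃ Y ∈ U ∃ n ∈ ℕ ∀ λ ∈ Λ ∀ P ∈ Y_λ, x_λ divides r_λ^n in the localization of D_λ at P} is a prime ideal of R contained in (U); (3) conversely, for every ultrafilter U in B and every nonempty subset X ⊆ (U), the union ⋃_{x ∈ X} (U)^{g(x)} is a prime ideal of R (the prime ideals of R contained in (U) and containing (0)_{F_U} form a chain under inclusion). -/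

import Mathlib

/-!
Common setup: `Λ` is an index set, `D λ` a family of commutative rings,
`R = ∏ λ, D λ` the product ring, and
`B = ∏ λ, P(max (D λ))` the product Boolean algebra of the power sets of the
sets of maximal ideals, realized as the Pi type `∀ l, Set (MaximalSpectrum (D l))`
with its componentwise Boolean algebra structure (meet = componentwise ∩,
join = componentwise ∪, `⊥ = (∅)_λ`, complement componentwise, order = componentwise ⊆).
-/

variable {Λ : Type*} {D : Λ → Type*}

/-- `S(a) = (V(a_λ))_λ ∈ B`, where `V(x)` is the set of maximal ideals containing `x`. -/
def SFam [∀ l, CommRing (D l)] (a : ∀ l, D l) : ∀ l, Set (MaximalSpectrum (D l)) :=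
  fun l => {P | a l ∈ P.asIdeal}

/-- `z(x) = {λ | x_λ = 0}`. -/
def ZFam [∀ l, CommRing (D l)] (x : ∀ l, D l) : Set Λ := {l | x l = 0}

/-- A filter in a Boolean algebra: a nonempty subset not containing `⊥`, closed
under meets, and upward closed. -/
def IsBFilter {B : Type*} [BooleanAlgebra B] (U : Set B) : Prop :=
  U.Nonempty ∧ ⊥ ∉ U ∧ (∀ X ∈ U, ∀ Y ∈ U, X ⊓ Y ∈ U) ∧ (∀ Y ∈ U, ∀ Z, Y ≤ Z → Z ∈ U)

/-- An ultrafilter in a Boolean algebra: a filter containing `Y` or `Yᶜ` for every `Y`. -/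
def IsBUltrafilter {B : Type*} [BooleanAlgebra B] (U : Set B) : Prop :=
  IsBFilter U ∧ ∀ Y, Y ∈ U ∨ Yᶜ ∈ U

/-- Property (+): for all `r` and all nonzero `a` there is `d` lying in every maximal
ideal containing `a` but not `r`, and in no maximal ideal containing `r`. -/
def PropertyPlus (A : Type*) [CommRing A] : Prop :=
  ∀ r a : A, a ≠ 0 → ∃ d : A,
    (∀ M : Ideal A, M.IsMaximal → a ∈ M → r ∉ M → d ∈ M) ∧
    (∀ M : Ideal A, M.IsMaximal → r ∈ M → d ∉ M)

/-- Property (++): for every `r` there is `d` with `D(r) = V(d)`, i.e. the maximal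
ideals containing `d` are exactly those not containing `r`. -/
def PropertyPlusPlus (A : Type*) [CommRing A] : Prop :=
  ∀ r : A, ∃ d : A, ∀ P : MaximalSpectrum A, d ∈ P.asIdeal ↔ r ∉ P.asIdeal

/-- Divisibility in the localization of a ring at a maximal ideal `P`:
`x` divides `y` in `A_P`. -/
def LocDvd {A : Type*} [CommRing A] (P : MaximalSpectrum A) (x y : A) : Prop :=
  (algebraMap A (Localization.AtPrime P.asIdeal) x) ∣
    algebraMap A (Localization.AtPrime P.asIdeal) y

/-- A Prüfer domain: an integral domain whose localization at every maximal ideal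
is a valuation ring. -/
def IsPrueferDomain (A : Type*) [CommRing A] [IsDomain A] : Prop :=
  ∀ P : MaximalSpectrum A, ValuationRing (Localization.AtPrime P.asIdeal)

/-- Membership in `(U)^{g(x)}`: `r ∈ (U)^{g(x)}` iff there are `Y ∈ U` and `n ∈ ℕ`
such that for all `λ` and all `P ∈ Y_λ`, `x_λ` divides `r_λ ^ n` in the localization
of `D λ` at `P`. -/
def UgMem [∀ l, CommRing (D l)] (U : Set (∀ l, Set (MaximalSpectrum (D l))))
    (x r : ∀ l, D l) : Prop :=
  ∃ Y ∈ U, ∃ n : ℕ, ∀ l, ∀ P ∈ Y l, LocDvd P (x l) (r l ^ n)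

/-- The minimal prime `(0)_{F_U}` as a set: those `r` whose zero set `z r` belongs to
the induced ultrafilter `F_U = { {λ | Y_λ ≠ ∅} : Y ∈ U }` on `Λ`. -/
def ZeroFU [∀ l, CommRing (D l)] (U : Set (∀ l, Set (MaximalSpectrum (D l)))) :
    Set (∀ l, D l) :=
  {r | ∃ Y ∈ U, ZFam r = {l | Y l ≠ ∅}}


/-!
Via `X ↦ {(λ, P) | P ∈ X_λ}`, `B` is the power set of the disjoint union of the maximal spectra,
so part (1) is the ultrafilter lemma: the sets `S(r)`, `r ∈ 𝔓`, have the finite intersection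
property, since finitely many elements of `R` with no common zero in any `max(D_λ)` generate
the unit ideal, componentwise and hence in `R`.

Everything else rests on divisibility in the valuation rings `(D_λ)_P` being total. It makes
`(U)^{g(x)}` prime (if `x ∣ ab` then `x ∣ a²` or `x ∣ b²`) and the `(U)^{g(x)}` a chain (`U`
decides on which side `x_λ ∣ y_λ` holds), so their unions are prime. For `𝔓 = ⋃ (U)^{g(x)}`
one uses that in a Prüfer domain `(x) : (b) + (b) : (x) = D`: writing `1 = s' + c` there and
`cx = sb`, the elements `s, s'` of `(x) : (b)` are never both in a maximal ideal at which `x`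
divides `b`. So if `x ∈ 𝔓` divides `rⁿ` locally on some `Y ∈ U`, then `S(s) ∧ S(s')` misses `Y`,
one of `s, s'` lies outside `𝔓 ⊆ (U)`, and `s rⁿ, s' rⁿ ∈ (x) ⊆ 𝔓` forces `r ∈ 𝔓`.
-/

namespace IsBUltrafilter

variable {B : Type*} [BooleanAlgebra B] {U : Set B}

lemma top_mem (hU : IsBUltrafilter U) : ⊤ ∈ U := by
  obtain ⟨⟨⟨Y, hY⟩, -, -, hup⟩, -⟩ := hU
  exact hup Y hY ⊤ le_top

lemma bot_notMem (hU : IsBUltrafilter U) : ⊥ ∉ U := hU.1.2.1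

lemma inf_mem (hU : IsBUltrafilter U) {X Y : B} (hX : X ∈ U) (hY : Y ∈ U) : X ⊓ Y ∈ U :=
  hU.1.2.2.1 X hX Y hY

lemma mono (hU : IsBUltrafilter U) {X Y : B} (hX : X ∈ U) (hXY : X ≤ Y) : Y ∈ U :=
  hU.1.2.2.2 X hX Y hXY

lemma compl_mem_iff_notMem (hU : IsBUltrafilter U) {X : B} : Xᶜ ∈ U ↔ X ∉ U :=
  ⟨fun hXc hX => hU.bot_notMem (inf_compl_eq_bot (a := X) ▸ hU.inf_mem hX hXc),
    (hU.2 X).resolve_left⟩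

end IsBUltrafilter

lemma isBUltrafilter_preimage {B α : Type*} [BooleanAlgebra B] (f : BoundedLatticeHom B (Set α))
    (𝒰 : Ultrafilter α) : IsBUltrafilter {X | f X ∈ 𝒰} := by
  refine ⟨⟨⟨⊤, ?_⟩, ?_, fun X hX Y hY => ?_, fun X hX Y hXY => ?_⟩, fun X => ?_⟩
  · show f ⊤ ∈ 𝒰
    rw [map_top]
    exact Filter.univ_mem
  · show f ⊥ ∉ 𝒰
    rw [map_bot]
    exact 𝒰.empty_notMem
  · show f (X ⊓ Y) ∈ 𝒰
    rw [map_inf]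
    exact Filter.inter_mem hX hY
  · exact Filter.mem_of_superset hX (OrderHomClass.mono f hXY)
  · show f X ∈ 𝒰 ∨ f Xᶜ ∈ 𝒰
    rw [map_compl']
    exact 𝒰.mem_or_compl_mem _

def Set.piSigmaHom {ι : Type*} (α : ι → Type*) :
    BoundedLatticeHom (∀ i, Set (α i)) (Set (Σ i, α i)) where
  toFun X := {p | p.2 ∈ X p.1}
  map_sup' _ _ := rfl
  map_inf' _ _ := rfl
  map_top' := rfl
  map_bot' := rfl

section LocDvd

variable {A : Type*} [CommRing A] {P : MaximalSpectrum A} {x y : A}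

lemma LocDvd.exists_dvd_mul (h : LocDvd P x y) : ∃ w ∉ P.asIdeal, x ∣ w * y := by
  obtain ⟨h, hh⟩ := h
  obtain ⟨⟨a, u⟩, hu⟩ := IsLocalization.surj P.asIdeal.primeCompl h
  have : algebraMap A (Localization.AtPrime P.asIdeal) (y * u) =
      algebraMap A (Localization.AtPrime P.asIdeal) (x * a) := by
    rw [map_mul, map_mul, hh, mul_assoc, hu]
  obtain ⟨v, hv⟩ := (IsLocalization.eq_iff_exists P.asIdeal.primeCompl _).mp this
  exact ⟨v * u, (v * u).2, v * a, by linear_combination hv⟩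

lemma not_locDvd_of_mem_of_notMem (hx : x ∈ P.asIdeal) (hy : y ∉ P.asIdeal) :
    ¬ LocDvd P x y := fun h =>
  (IsLocalization.AtPrime.isUnit_to_map_iff _ P.asIdeal x).mp
    (isUnit_of_dvd_unit h ((IsLocalization.AtPrime.isUnit_to_map_iff _ P.asIdeal y).mpr hy)) hx

lemma mem_colon_span_singleton {a b c : A} :
    c ∈ (Ideal.span {a}).colon {b} ↔ a ∣ c * b := by
  rw [Submodule.mem_colon_singleton, smul_eq_mul, Ideal.mem_span_singleton]

variable [IsDomain A]

lemma locDvd_total (hA : IsPrueferDomain A) (P : MaximalSpectrum A) (a b : A) :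
    LocDvd P a b ∨ LocDvd P b a :=
  haveI := hA P
  ValuationRing.dvd_total _ _

lemma LocDvd.mul_self_or_mul_self (hA : IsPrueferDomain A) {a b : A}
    (h : LocDvd P x (a * b)) : LocDvd P x (a * a) ∨ LocDvd P x (b * b) := by
  unfold LocDvd at h ⊢
  simp only [map_mul] at h ⊢
  rcases locDvd_total hA P a b with hab | hba
  · exact Or.inr (h.trans (mul_dvd_mul_right hab _))
  · exact Or.inl (h.trans (mul_dvd_mul_left _ hba))

lemma colon_sup_colon_eq_top (hA : IsPrueferDomain A) (a b : A) :
    (Ideal.span {a}).colon {b} ⊔ (Ideal.span {b}).colon {a} = ⊤ := by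
  by_contra hne
  obtain ⟨M, hM, hle⟩ := Ideal.exists_le_maximal _ hne
  rcases locDvd_total hA ⟨M, hM⟩ a b with hab | hba
  · obtain ⟨w, hw, hdvd⟩ := hab.exists_dvd_mul
    exact hw (hle (Ideal.mem_sup_left (mem_colon_span_singleton.mpr hdvd)))
  · obtain ⟨w, hw, hdvd⟩ := hba.exists_dvd_mul
    exact hw (hle (Ideal.mem_sup_right (mem_colon_span_singleton.mpr hdvd)))

lemma exists_dvd_mul_pair_notMem_of_locDvd (hA : IsPrueferDomain A) (x b : A) :
    ∃ s s' : A, x ∣ s * b ∧ x ∣ s' * b ∧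
      ∀ P : MaximalSpectrum A, LocDvd P x b → s ∉ P.asIdeal ∨ s' ∉ P.asIdeal := by
  by_cases hx : x = 0
  · subst hx
    by_cases hb : b = 0
    · exact ⟨1, 1, by simp [hb], by simp [hb], fun P _ => Or.inl P.asIdeal.one_notMem⟩
    refine ⟨0, 0, by simp, by simp, fun P h => absurd ?_ hb⟩
    obtain ⟨w, hw, hdvd⟩ := h.exists_dvd_mul
    exact (mul_eq_zero.mp (zero_dvd_iff.mp hdvd)).resolve_left
      fun hw0 => hw (hw0 ▸ P.asIdeal.zero_mem)
  obtain ⟨s', hs', c, hc, hsum⟩ := Submodule.mem_sup.mp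
    ((colon_sup_colon_eq_top hA x b).symm ▸ Submodule.mem_top : (1 : A) ∈ _)
  obtain ⟨s, hs⟩ := mem_colon_span_singleton.mp hc
  refine ⟨s, s', ⟨c, by linear_combination -hs⟩, mem_colon_span_singleton.mp hs', fun P h => ?_⟩
  obtain ⟨w, hw, t, ht⟩ := h.exists_dvd_mul
  by_contra! hss
  have hcP : c ∉ P.asIdeal := fun hcP => P.asIdeal.one_notMem (hsum ▸ add_mem hss.2 hcP)
  have hwc : w * c = t * s := mul_left_cancel₀ hx (by linear_combination w * hs + s * ht)
  have : w * c ∈ P.asIdeal := hwc ▸ P.asIdeal.mul_mem_left t hss.1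
  exact (P.isMaximal.isPrime.mem_or_mem this).elim hw hcP

end LocDvd

lemma Ideal.isPrime_sSup_of_isChain {R : Type*} [CommRing R] {s : Set (Ideal R)}
    (hs : s.Nonempty) (hchain : IsChain (· ≤ ·) s) (hprime : ∀ I ∈ s, I.IsPrime) :
    (sSup s).IsPrime := by
  have hmem r : r ∈ sSup s ↔ ∃ I ∈ s, r ∈ I := Submodule.mem_sSup_of_directed hs hchain.directedOn
  refine ⟨fun htop => ?_, fun {a b} hab => ?_⟩
  · obtain ⟨I, hI, h1⟩ := (hmem 1).mp ((Ideal.eq_top_iff_one _).mp htop)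
    exact (hprime I hI).ne_top ((Ideal.eq_top_iff_one _).mpr h1)
  · obtain ⟨I, hI, hab⟩ := (hmem _).mp hab
    exact ((hprime I hI).mem_or_mem hab).imp (fun h => (hmem _).mpr ⟨I, hI, h⟩)
      fun h => (hmem _).mpr ⟨I, hI, h⟩

section ProductRing

variable [∀ l, CommRing (D l)]

lemma Pi.one_mem_span_range_of_forall_exists_notMem {ι : Type*} [Fintype ι]
    (v : ι → ∀ l, D l) (h : ∀ l, ∀ P : MaximalSpectrum (D l), ∃ i, v i l ∉ P.asIdeal) :
    (1 : ∀ l, D l) ∈ Ideal.span (Set.range v) := by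
  have hcomp l : ∃ c : ι → D l, ∑ i, c i * v i l = 1 := by
    refine Ideal.mem_span_range_iff_exists_fun.mp ((Ideal.eq_top_iff_one _).mp ?_)
    by_contra hne
    obtain ⟨M, hM, hle⟩ := Ideal.exists_le_maximal _ hne
    obtain ⟨i, hi⟩ := h l ⟨M, hM⟩
    exact hi (hle (Ideal.subset_span ⟨i, rfl⟩))
  choose c hc using hcomp
  exact Ideal.mem_span_range_iff_exists_fun.mpr
    ⟨fun i l => c l i, funext fun l => by simpa [Finset.sum_apply] using hc l⟩

lemma sFam_one : SFam (1 : ∀ l, D l) = ⊥ := by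
  funext l
  exact Set.eq_empty_of_forall_notMem fun P => P.asIdeal.one_notMem

lemma exists_isBUltrafilter_sFam_mem {𝔓 : Ideal (∀ l, D l)} (h𝔓 : 𝔓 ≠ ⊤) :
    ∃ U : Set (∀ l, Set (MaximalSpectrum (D l))), IsBUltrafilter U ∧ ∀ r ∈ 𝔓, SFam r ∈ U := by
  let f := Set.piSigmaHom fun l => MaximalSpectrum (D l)
  obtain ⟨𝒰, h𝒰⟩ := Ultrafilter.exists_ultrafilter_of_finite_inter_nonempty
    ((fun r => f (SFam r)) '' 𝔓) fun T hT => by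
      by_contra hempty
      choose r hr hrT using fun A : T => hT A.2
      refine h𝔓 ((Ideal.eq_top_iff_one _).mpr (Ideal.span_le.mpr ?_
        (Pi.one_mem_span_range_of_forall_exists_notMem r fun l P => ?_)))
      · rintro _ ⟨A, rfl⟩
        exact hr A
      · obtain ⟨A, hA, hlP⟩ : ∃ A ∈ T, (⟨l, P⟩ : Σ l, MaximalSpectrum (D l)) ∉ A := by
          by_contra! h
          exact hempty ⟨⟨l, P⟩, Set.mem_sInter.mpr h⟩
        exact ⟨⟨A, hA⟩, fun hmem => hlP (by
          rw [show A = f (SFam (r ⟨A, hA⟩)) from (hrT ⟨A, hA⟩).symm]; exact hmem)⟩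
  exact ⟨_, isBUltrafilter_preimage f 𝒰, fun r hr => h𝒰 ⟨r, hr, rfl⟩⟩

end ProductRing

section UgIdeal

variable [∀ l, CommRing (D l)] {U : Set (∀ l, Set (MaximalSpectrum (D l)))}

def ugIdeal (hU : IsBUltrafilter U) (x : ∀ l, D l) : Ideal (∀ l, D l) where
  carrier := {r | UgMem U x r}
  zero_mem' := ⟨⊤, hU.top_mem, 1, fun l P _ => by simp [LocDvd]⟩
  add_mem' := by
    rintro r t ⟨Y, hY, m, hr⟩ ⟨Z, hZ, n, ht⟩
    refine ⟨Y ⊓ Z, hU.inf_mem hY hZ, m + n, fun l P ⟨hPY, hPZ⟩ => ?_⟩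
    have hr' := hr l P hPY
    have ht' := ht l P hPZ
    unfold LocDvd at hr' ht' ⊢
    rw [← Ideal.mem_span_singleton, map_pow] at hr' ht' ⊢
    rw [Pi.add_apply, map_add]
    exact Ideal.add_pow_mem_of_pow_mem_of_le _ hr' ht' (by omega)
  smul_mem' := by
    rintro a r ⟨Y, hY, n, hr⟩
    exact ⟨Y, hY, n, fun l P hP => by simpa [LocDvd, mul_pow] using (hr l P hP).mul_left _⟩

variable (hU : IsBUltrafilter U) {x r : ∀ l, D l}
include hU

lemma self_mem_ugIdeal (x : ∀ l, D l) : x ∈ ugIdeal hU x :=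
  ⟨⊤, hU.top_mem, 1, fun l P _ => by simp [LocDvd]⟩

lemma sFam_mem_of_mem_ugIdeal (hx : SFam x ∈ U) (hr : r ∈ ugIdeal hU x) : SFam r ∈ U := by
  obtain ⟨Y, hY, n, hdvd⟩ := hr
  refine hU.mono (hU.inf_mem hY hx) fun l P ⟨hPY, hxP⟩ => ?_
  by_contra hrP
  exact not_locDvd_of_mem_of_notMem hxP
    (fun h => hrP (P.isMaximal.isPrime.mem_of_pow_mem n h)) (hdvd l P hPY)

lemma ugIdeal_ne_top (hx : SFam x ∈ U) : ugIdeal hU x ≠ ⊤ := fun h =>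
  hU.bot_notMem (sFam_one (D := D) ▸
    sFam_mem_of_mem_ugIdeal hU hx ((Ideal.eq_top_iff_one _).mp h))

lemma ugIdeal_le_of_locDvd_mem {y : ∀ l, D l}
    (h : (fun l => {P | LocDvd P (y l) (x l)}) ∈ U) : ugIdeal hU x ≤ ugIdeal hU y :=
  fun _ ⟨Y, hY, n, hdvd⟩ =>
    ⟨Y ⊓ _, hU.inf_mem hY h, n, fun l P hP => dvd_trans hP.2 (hdvd l P hP.1)⟩

variable [∀ l, IsDomain (D l)] (hA : ∀ l, IsPrueferDomain (D l))
include hA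

lemma ugIdeal_isPrime (hx : SFam x ∈ U) : (ugIdeal hU x).IsPrime := by
  refine ⟨ugIdeal_ne_top hU hx, fun {r t} ⟨Y, hY, n, hdvd⟩ => ?_⟩
  let Z : ∀ l, Set (MaximalSpectrum (D l)) := fun l => {P | LocDvd P (x l) (r l ^ (n + n))}
  by_cases hZ : Z ∈ U
  · exact Or.inl ⟨Z, hZ, n + n, fun l P hP => hP⟩
  refine Or.inr ⟨Y ⊓ Zᶜ, hU.inf_mem hY (hU.compl_mem_iff_notMem.mpr hZ), n + n,
    fun l P ⟨hPY, hPZ⟩ => ?_⟩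
  have hrt := hdvd l P hPY
  rw [Pi.mul_apply, mul_pow] at hrt
  rw [pow_add]
  exact (hrt.mul_self_or_mul_self (hA l)).resolve_left fun h =>
    hPZ (show LocDvd P (x l) (r l ^ (n + n)) by rwa [pow_add])

lemma ugIdeal_le_total (x y : ∀ l, D l) :
    ugIdeal hU x ≤ ugIdeal hU y ∨ ugIdeal hU y ≤ ugIdeal hU x :=
  (hU.2 _).imp (ugIdeal_le_of_locDvd_mem hU) fun h =>
    ugIdeal_le_of_locDvd_mem hU
      (hU.mono h fun l P hP => (locDvd_total (hA l) P (y l) (x l)).resolve_left hP)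

lemma isChain_image_ugIdeal (X : Set (∀ l, D l)) : IsChain (· ≤ ·) (ugIdeal hU '' X) := by
  rintro _ ⟨x, -, rfl⟩ _ ⟨y, -, rfl⟩ -
  exact ugIdeal_le_total hU hA x y

lemma mem_sSup_image_ugIdeal {X : Set (∀ l, D l)} (hX : X.Nonempty) :
    r ∈ sSup (ugIdeal hU '' X) ↔ ∃ x ∈ X, UgMem U x r := by
  rw [Submodule.mem_sSup_of_directed (hX.image _) (isChain_image_ugIdeal hU hA X).directedOn,
    Set.exists_mem_image]
  rfl

lemma Ideal.IsPrime.mem_of_mem_ugIdeal {𝔓 : Ideal (∀ l, D l)} (h𝔓 : 𝔓.IsPrime)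
    (hsub : ∀ r ∈ 𝔓, SFam r ∈ U) (hx : x ∈ 𝔓) (hr : r ∈ ugIdeal hU x) : r ∈ 𝔓 := by
  obtain ⟨Y, hY, n, hdvd⟩ := hr
  choose s s' hs hs' hss' using fun l =>
    exists_dvd_mul_pair_notMem_of_locDvd (hA l) (x l) (r l ^ n)
  have hdisj : SFam s ⊓ SFam s' ⊓ Y = ⊥ := le_bot_iff.mp fun l P ⟨⟨hsP, hs'P⟩, hPY⟩ =>
    (hss' l P (hdvd l P hPY)).elim (· hsP) (· hs'P)
  have hnot : s ∉ 𝔓 ∨ s' ∉ 𝔓 := by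
    by_contra! h
    exact hU.bot_notMem (hdisj ▸ hU.inf_mem (hU.inf_mem (hsub s h.1) (hsub s' h.2)) hY)
  refine h𝔓.mem_of_pow_mem n ?_
  rcases hnot with h | h
  · exact (h𝔓.mem_or_mem (Ideal.mem_of_dvd _ (pi_dvd_iff.mpr hs) hx)).resolve_left h
  · exact (h𝔓.mem_or_mem (Ideal.mem_of_dvd _ (pi_dvd_iff.mpr hs') hx)).resolve_left h

end UgIdeal

/-- For a family of Prüfer domains `D l` and `R = ∏ l, D l`:
(1) every prime ideal `𝔓` of `R` is contained in some `(U)` with `U` an ultrafilter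
in `B`; (2) if `𝔓` is prime and `𝔓 ⊆ (U)`, then `𝔓` is the union of the sets
`(U)^{g(x)}` for `x ∈ 𝔓`, and each `(U)^{g(x)}` is a prime ideal of `R` contained in
`(U)`; (3) conversely, for every ultrafilter `U` in `B` and every nonempty `X ⊆ (U)`,
the union of the `(U)^{g(x)}` for `x ∈ X` is a prime ideal of `R`. -/
theorem stmt_18 [∀ l, CommRing (D l)] [∀ l, IsDomain (D l)]
    (hpruefer : ∀ l, IsPrueferDomain (D l)) :
    (∀ 𝔓 : Ideal (∀ l, D l), 𝔓.IsPrime →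
      ∃ U : Set (∀ l, Set (MaximalSpectrum (D l))), IsBUltrafilter U ∧
        ∀ r ∈ 𝔓, SFam r ∈ U) ∧
    (∀ 𝔓 : Ideal (∀ l, D l), 𝔓.IsPrime →
      ∀ U : Set (∀ l, Set (MaximalSpectrum (D l))), IsBUltrafilter U →
        (∀ r ∈ 𝔓, SFam r ∈ U) →
        ((∀ r : ∀ l, D l, r ∈ 𝔓 ↔ ∃ x ∈ 𝔓, UgMem U x r) ∧
          ∀ x ∈ 𝔓, ∃ I : Ideal (∀ l, D l), I.IsPrime ∧
            (∀ r, r ∈ I ↔ UgMem U x r) ∧ ∀ r ∈ I, SFam r ∈ U)) ∧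
    (∀ U : Set (∀ l, Set (MaximalSpectrum (D l))), IsBUltrafilter U →
      ∀ X : Set (∀ l, D l), X.Nonempty → (∀ x ∈ X, SFam x ∈ U) →
        ∃ I : Ideal (∀ l, D l), I.IsPrime ∧
          ∀ r : ∀ l, D l, r ∈ I ↔ ∃ x ∈ X, UgMem U x r) := by
  refine ⟨fun 𝔓 h𝔓 => exists_isBUltrafilter_sFam_mem h𝔓.ne_top,
    fun 𝔓 h𝔓 U hU hsub => ⟨?_, ?_⟩, fun U hU X hX hXU => ?_⟩
  · exact fun r => ⟨fun hr => ⟨r, hr, self_mem_ugIdeal hU r⟩,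
      fun ⟨x, hx, hr⟩ => h𝔓.mem_of_mem_ugIdeal hU hpruefer hsub hx hr⟩
  · exact fun x hx => ⟨ugIdeal hU x, ugIdeal_isPrime hU hpruefer (hsub x hx), fun _ => Iff.rfl,
      fun _ => sFam_mem_of_mem_ugIdeal hU (hsub x hx)⟩
  · refine ⟨sSup (ugIdeal hU '' X),
      Ideal.isPrime_sSup_of_isChain (hX.image _) (isChain_image_ugIdeal hU hpruefer X) ?_,
      fun _ => mem_sSup_image_ugIdeal hU hpruefer hX⟩
    rintro _ ⟨x, hx, rfl⟩
    exact ugIdeal_isPrime hU hpruefer (hXU x hx)
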